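/- Let H be a real Hilbert space and let C ⊆ H be nonempty, closed and convex. If T : C → C is a nonexpansive and asymptotically regular operator with Fix(T) ≠ ∅, then for every x₀ ∈ C, the sequence (x_n) generated by x_n = T(x_{n−1}) converges weakly to a point x_* ∈ Fix(T). -/

import Mathlib

open Filter Topology RealInnerProductSpace

variable {H : Type*} [NormedAddCommGroup H] [InnerProductSpace ℝ H] [CompleteSpace H]

/-- Weak convergence in a Hilbert space: `x n ⇀ p`. -/
def WeakConvergesTo (x : ℕ → H) (p : H) : Prop :=
  ∀ y : H, Tendsto (fun n => ⟪x n, y⟫) atTop (𝓝 ⟪p, y⟫)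

/-- `compSeq n g = g (n-1) ∘ ⋯ ∘ g 0` (the identity when `n = 0`). -/
def compSeq {α : Type*} : ℕ → (ℕ → α → α) → (α → α)
  | 0, _ => id
  | n + 1, g => g n ∘ compSeq n g

/-- `P` is the metric projection onto `C`. -/
def IsProjOn (C : Set H) (P : H → H) : Prop :=
  ∀ x, P x ∈ C ∧ ∀ y ∈ C, ‖x - P x‖ ≤ ‖x - y‖

/-- Nonexpansive operator. -/
def Nonexpansive (T : H → H) : Prop := ∀ x y, ‖T x - T y‖ ≤ ‖x - y‖

/-- Condition (S). -/
def CondS (T : H → H) : Prop :=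
  ∀ x y : ℕ → H, (∃ c, ∀ n, ‖x n - y n‖ ≤ c) →
    Tendsto (fun n => ‖x n - y n‖ - ‖T (x n) - T (y n)‖) atTop (𝓝 0) →
    Tendsto (fun n => x n - y n - (T (x n) - T (y n))) atTop (𝓝 (0 : H))

/-- Strongly nonexpansive operator. -/
def StronglyNonexpansive (T : H → H) : Prop := Nonexpansive T ∧ CondS T

/-- Firmly nonexpansive operator. -/
def FirmlyNonexpansive (T : H → H) : Prop :=
  ∀ x y, ‖T x - T y‖ ^ 2 ≤ ⟪T x - T y, x - y⟫

/-- Averaged operator. -/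
def Averaged (T : H → H) : Prop :=
  ∃ lam ∈ Set.Ioo (0 : ℝ) 1, ∃ U : H → H, Nonexpansive U ∧
    T = fun x => (1 - lam) • x + lam • U x

/-- The unrestricted `r`-set Douglas–Rachford operators `S n` associated with projections
`proj i` onto the sets `C i`, indices chosen by `f`: `S n = 2⁻¹ (Id + R_{C_{f((r-1)n+r-1)}} ∘ ⋯ ∘ R_{C_{f((r-1)n)}})`. -/
noncomputable def drS (proj : ℕ → H → H) (r : ℕ) (f : ℕ → ℕ) (n : ℕ) : H → H :=
  fun x => (2⁻¹ : ℝ) • (x + compSeq r (fun j y => (2 : ℝ) • proj (f ((r - 1) * n + j)) y - y) x)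

/-! For a fixed point `p`, nonexpansiveness makes `‖x n - p‖` nonincreasing, hence convergent, so
the iterates are bounded and have weak cluster points. Asymptotic regularity and demiclosedness of
`I - T` (expand `‖x n - T p‖²` around `p`) show that every weak cluster point is a fixed point.
Finally, if `‖x n - p‖` and `‖x n - q‖` both converge, polarization makes `⟪x n, p - q⟫`
convergent, so weak cluster points `p`, `q` satisfy `⟪p, p - q⟫ = ⟪q, p - q⟫`, i.e. `p = q`. -/

theorem exists_tendsto_norm_sub_of_nonexpansiveOn {E : Type*} [SeminormedAddCommGroup E]
    {C : Set E} {T : E → E}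
    (hT : ∀ x ∈ C, ∀ y ∈ C, ‖T x - T y‖ ≤ ‖x - y‖) {x : ℕ → E} (hxC : ∀ n, x n ∈ C)
    (hx : ∀ n, x (n + 1) = T (x n)) {p : E} (hpC : p ∈ C) (hpT : T p = p) :
    ∃ a, Tendsto (fun n => ‖x n - p‖) atTop (𝓝 a) := by
  have hanti : Antitone fun n => ‖x n - p‖ := antitone_nat_of_succ_le fun n => by
    simpa only [hx, hpT] using hT _ (hxC n) _ hpC
  exact ⟨_, tendsto_atTop_ciInf hanti ⟨0, fun _ ⟨n, hn⟩ => hn ▸ norm_nonneg _⟩⟩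

section

variable {E : Type*} [NormedAddCommGroup E] [InnerProductSpace ℝ E]

theorem WeakConvergesTo.tendsto_inner_sub {x : ℕ → E} {p : E} (hx : WeakConvergesTo x p)
    (a y : E) : Tendsto (fun n => ⟪x n - a, y⟫) atTop (𝓝 ⟪p - a, y⟫) := by
  simp only [inner_sub_left]
  exact (hx y).sub tendsto_const_nhds

theorem eq_of_weakConvergesTo_of_tendsto_norm_sub {x : ℕ → E} {p q : E} {a b : ℝ}
    (hp : Tendsto (fun n => ‖x n - p‖) atTop (𝓝 a))
    (hq : Tendsto (fun n => ‖x n - q‖) atTop (𝓝 b)) {φ ψ : ℕ → ℕ}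
    (hφ : Tendsto φ atTop atTop) (hψ : Tendsto ψ atTop atTop)
    (hφp : WeakConvergesTo (x ∘ φ) p) (hψq : WeakConvergesTo (x ∘ ψ) q) : p = q := by
  have hpolar : ∀ n, ⟪x n, p - q⟫ = (‖x n - q‖ ^ 2 - ‖x n - p‖ ^ 2 + ‖p‖ ^ 2 - ‖q‖ ^ 2) / 2 := by
    intro n
    rw [norm_sub_sq_real, norm_sub_sq_real, inner_sub_right]
    ring
  have hlim : Tendsto (fun n => ⟪x n, p - q⟫) atTop
      (𝓝 ((b ^ 2 - a ^ 2 + ‖p‖ ^ 2 - ‖q‖ ^ 2) / 2)) := by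
    simp only [hpolar]
    exact ((((hq.pow 2).sub (hp.pow 2)).add_const _).sub_const _).div_const 2
  have hpL := tendsto_nhds_unique (hφp (p - q)) (hlim.comp hφ)
  have hqL := tendsto_nhds_unique (hψq (p - q)) (hlim.comp hψ)
  have : ⟪p - q, p - q⟫ = 0 := by rw [inner_sub_left, hpL, hqL, sub_self]
  exact sub_eq_zero.1 (inner_self_eq_zero.1 this)

variable [CompleteSpace E]

theorem WeakConvergesTo.exists_norm_le {x : ℕ → E} {p : E} (hx : WeakConvergesTo x p) :
    ∃ B, ∀ n, ‖x n‖ ≤ B := by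
  obtain ⟨B, hB⟩ := banach_steinhaus (g := fun n => innerSL ℝ (x n)) fun y => by
    obtain ⟨C, hC⟩ := (hx y).norm.bddAbove_range
    exact ⟨C, fun n => hC ⟨n, rfl⟩⟩
  exact ⟨B, fun n => by simpa only [innerSL_apply_norm] using hB n⟩

theorem exists_strictMono_weakConvergesTo {x : ℕ → E} {B : ℝ} (hB : ∀ n, ‖x n‖ ≤ B) :
    ∃ p φ, StrictMono φ ∧ WeakConvergesTo (x ∘ φ) p := by
  -- Banach–Alaoglu needs a separable space: work in the closed span `M` of the sequence and
  -- test against `y` through its orthogonal projection onto `M`.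
  set M := (Submodule.span ℝ (Set.range x)).topologicalClosure
  have hxM : ∀ n, x n ∈ M :=
    fun n => Submodule.le_topologicalClosure _ (Submodule.subset_span ⟨n, rfl⟩)
  have : CompleteSpace M := Submodule.isClosed_topologicalClosure _ |>.completeSpace_coe
  have : TopologicalSpace.SeparableSpace M :=
    ((Set.countable_range x).isSeparable.span.closure).separableSpace
  set ℓ : ℕ → WeakDual ℝ M :=
    fun n => WeakDual.toStrongDual.symm (InnerProductSpace.toDual ℝ M ⟨x n, hxM n⟩)
  have hℓ : ∀ n, ℓ n ∈ WeakDual.toStrongDual ⁻¹' Metric.closedBall 0 B := fun n => by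
    simp only [ℓ, Set.mem_preimage, LinearEquiv.apply_symm_apply]
    exact mem_closedBall_zero_iff.mpr
      (((InnerProductSpace.toDual ℝ M).norm_map _).trans_le (hB n))
  obtain ⟨f, -, φ, hφ, hf⟩ := WeakDual.isSeqCompact_closedBall ℝ M 0 B hℓ
  refine ⟨(InnerProductSpace.toDual ℝ M).symm (WeakDual.toStrongDual f), φ, hφ, fun y => ?_⟩
  have key : ∀ v : M,
      ⟪(v : E), y⟫ = InnerProductSpace.toDual ℝ M v (M.orthogonalProjectionOnto y) := fun v => by
    rw [InnerProductSpace.toDual_apply_apply,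
      Submodule.inner_orthogonalProjectionOnto_eq_of_mem_left]
  have hlim : Tendsto (fun n => ℓ (φ n) (M.orthogonalProjectionOnto y)) atTop
      (𝓝 (f (M.orthogonalProjectionOnto y))) :=
    ((WeakDual.eval_continuous _).tendsto f).comp hf
  convert hlim using 2 with n
  · exact key ⟨x (φ n), hxM _⟩
  · rw [← Submodule.inner_orthogonalProjectionOnto_eq_of_mem_left,
      InnerProductSpace.toDual_symm_apply, WeakDual.toStrongDual_apply]

theorem WeakConvergesTo.mem_of_isClosed_of_convex {C : Set E} (hcl : IsClosed C)
    (hconv : Convex ℝ C) {x : ℕ → E} {p : E} (hx : WeakConvergesTo x p) (hxC : ∀ n, x n ∈ C) :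
    p ∈ C := by
  obtain ⟨v, hvC, hv⟩ :=
    exists_norm_eq_iInf_of_complete_convex ⟨x 0, hxC 0⟩ hcl.isComplete hconv p
  have hobtuse := (norm_eq_iInf_iff_real_inner_le_zero hconv hvC).1 hv
  have hlim := hx.tendsto_inner_sub v (p - v)
  have : ⟪p - v, p - v⟫ ≤ 0 :=
    le_of_tendsto' hlim fun n => real_inner_comm (x n - v) _ ▸ hobtuse _ (hxC n)
  rwa [sub_eq_zero.1 (real_inner_self_nonpos.1 this)]

theorem WeakConvergesTo.apply_eq_self {C : Set E} {T : E → E}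
    (hT : ∀ x ∈ C, ∀ y ∈ C, ‖T x - T y‖ ≤ ‖x - y‖) {x : ℕ → E} {p : E}
    (hx : WeakConvergesTo x p) (hxC : ∀ n, x n ∈ C) (hpC : p ∈ C)
    (hreg : Tendsto (fun n => ‖T (x n) - x n‖) atTop (𝓝 0)) : T p = p := by
  obtain ⟨B, hB⟩ := hx.exists_norm_le
  set e := fun n => ‖T (x n) - x n‖
  have hle : ∀ n, ‖p - T p‖ ^ 2 + 2 * ⟪x n - p, p - T p⟫ ≤ e n * (e n + 2 * (B + ‖p‖)) := by
    intro n
    have htri : ‖x n - T p‖ ≤ e n + ‖x n - p‖ := by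
      calc ‖x n - T p‖ ≤ ‖x n - T (x n)‖ + ‖T (x n) - T p‖ := norm_sub_le_norm_sub_add_norm_sub ..
        _ ≤ e n + ‖x n - p‖ := by
          rw [norm_sub_rev]
          exact add_le_add_right (hT _ (hxC n) _ hpC) _
    have hexp : ‖x n - T p‖ ^ 2 = ‖x n - p‖ ^ 2 + 2 * ⟪x n - p, p - T p⟫ + ‖p - T p‖ ^ 2 := by
      rw [← norm_add_sq_real, sub_add_sub_cancel]
    have hbdd : ‖x n - p‖ ≤ B + ‖p‖ := (norm_sub_le _ _).trans (by linarith [hB n])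
    have he : 0 ≤ e n := norm_nonneg _
    nlinarith [norm_nonneg (x n - p), norm_nonneg (x n - T p)]
  have hleft : Tendsto (fun n => ‖p - T p‖ ^ 2 + 2 * ⟪x n - p, p - T p⟫) atTop
      (𝓝 (‖p - T p‖ ^ 2)) := by
    simpa using tendsto_const_nhds.add ((hx.tendsto_inner_sub p (p - T p)).const_mul 2)
  have hright : Tendsto (fun n => e n * (e n + 2 * (B + ‖p‖))) atTop (𝓝 0) := by
    simpa using hreg.mul (hreg.add_const _)
  have hsq : ‖p - T p‖ ^ 2 ≤ 0 := le_of_tendsto_of_tendsto' hleft hright hle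
  exact (sub_eq_zero.1 (norm_le_zero_iff.1 (by nlinarith [norm_nonneg (p - T p)]))).symm

theorem exists_weakConvergesTo_of_opial {F : Set E} (hF : F.Nonempty) {x : ℕ → E}
    (hdist : ∀ p ∈ F, ∃ a, Tendsto (fun n => ‖x n - p‖) atTop (𝓝 a))
    (hclust : ∀ φ : ℕ → ℕ, Tendsto φ atTop atTop → ∀ q, WeakConvergesTo (x ∘ φ) q → q ∈ F) :
    ∃ p ∈ F, WeakConvergesTo x p := by
  obtain ⟨z, hz⟩ := hF
  obtain ⟨a, ha⟩ := hdist z hz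
  obtain ⟨B, hB⟩ := ha.bddAbove_range
  have hbdd : ∀ n, ‖x n‖ ≤ B + ‖z‖ := fun n =>
    (norm_le_norm_sub_add (x n) z).trans (by gcongr; exact hB ⟨n, rfl⟩)
  obtain ⟨p, φ, hφ, hp⟩ := exists_strictMono_weakConvergesTo hbdd
  have hpF := hclust φ hφ.tendsto_atTop p hp
  refine ⟨p, hpF, fun y => tendsto_of_subseq_tendsto fun ns hns => ?_⟩
  obtain ⟨q, ψ, hψ, hq⟩ := exists_strictMono_weakConvergesTo fun n => hbdd (ns n)
  have hqF := hclust (ns ∘ ψ) (hns.comp hψ.tendsto_atTop) q hq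
  obtain ⟨b, hb⟩ := hdist p hpF
  obtain ⟨c, hc⟩ := hdist q hqF
  obtain rfl := eq_of_weakConvergesTo_of_tendsto_norm_sub hb hc hφ.tendsto_atTop
    (hns.comp hψ.tendsto_atTop) hp hq
  exact ⟨ψ, hq y⟩

end

theorem stmt19_general
    (C : Set H) (hcl : IsClosed C) (hconv : Convex ℝ C)
    (T : H → H) (hmaps : Set.MapsTo T C C)
    (hT : ∀ x ∈ C, ∀ y ∈ C, ‖T x - T y‖ ≤ ‖x - y‖)
    (har : ∀ x ∈ C, Tendsto (fun n => ‖T^[n + 1] x - T^[n] x‖) atTop (𝓝 0))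
    (hfix : ∃ z ∈ C, T z = z)
    (x : ℕ → H) (hx0 : x 0 ∈ C) (hx : ∀ n, x (n + 1) = T (x n)) :
    ∃ p, (p ∈ C ∧ T p = p) ∧ WeakConvergesTo x p := by
  have hiter : ∀ n, x n = T^[n] (x 0) := fun n => by
    induction n with
    | zero => rfl
    | succ n ih => rw [hx, ih, Function.iterate_succ_apply']
  have hxC : ∀ n, x n ∈ C := fun n => hiter n ▸ hmaps.iterate n hx0
  have hreg : Tendsto (fun n => ‖T (x n) - x n‖) atTop (𝓝 0) := by
    have hstep : ∀ n, T (x n) - x n = T^[n + 1] (x 0) - T^[n] (x 0) := fun n => by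
      rw [Function.iterate_succ_apply', ← hiter]
    simpa only [hstep] using har _ hx0
  refine exists_weakConvergesTo_of_opial hfix
    (fun p ⟨hpC, hpT⟩ => exists_tendsto_norm_sub_of_nonexpansiveOn hT hxC hx hpC hpT)
    fun φ hφ q hq => ?_
  have hqC := hq.mem_of_isClosed_of_convex hcl hconv fun n => hxC _
  exact ⟨hqC, hq.apply_eq_self hT (fun n => hxC _) hqC (hreg.comp hφ)⟩

/-- Opial's theorem: a nonexpansive asymptotically regular self-mapping of a
nonempty closed convex set with a fixed point generates weakly convergent Picard iterates. -/
theorem stmt19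
    (C : Set H) (hne : C.Nonempty) (hcl : IsClosed C) (hconv : Convex ℝ C)
    (T : H → H) (hmaps : Set.MapsTo T C C)
    (hT : ∀ x ∈ C, ∀ y ∈ C, ‖T x - T y‖ ≤ ‖x - y‖)
    (har : ∀ x ∈ C, Tendsto (fun n => ‖T^[n + 1] x - T^[n] x‖) atTop (𝓝 0))
    (hfix : ∃ z ∈ C, T z = z)
    (x : ℕ → H) (hx0 : x 0 ∈ C) (hx : ∀ n, x (n + 1) = T (x n)) :
    ∃ p, (p ∈ C ∧ T p = p) ∧ WeakConvergesTo x p :=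
  stmt19_general C hcl hconv T hmaps hT har hfix x hx0 hx
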